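/- Let g ∈ GL(2,ℂ) be the matrix [[√2, i],[i, −√2]] and let H be the subgroup of GL(2,ℂ) generated by g and SO(2,ℂ) = { [[c, s],[−s, c]] : c, s ∈ ℂ, c² + s² = 1 }. Then H acts irreducibly on ℂ² regarded as a real vector space: the only real-linear subspaces U of ℂ² satisfying h·U ⊆ U for all h ∈ H are U = 0 and U = ℂ². -/
import Mathlib


open Matrix

/-- The complex matrix `g = φ(G) = [[√2, i], [i, -√2]]`. -/
noncomputable def gC : Matrix (Fin 2) (Fin 2) ℂ :=
  !![(Real.sqrt 2 : ℂ), Complex.I;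
     Complex.I, -(Real.sqrt 2 : ℂ)]

/-- The subgroup `H` of `GL(2, ℂ)` generated by `g` and
`SO(2, ℂ) = { [[c, s], [-s, c]] : c² + s² = 1 }`. -/
noncomputable def Hgroup : Subgroup (GL (Fin 2) ℂ) :=
  Subgroup.closure
    {u : GL (Fin 2) ℂ |
      (u : Matrix (Fin 2) (Fin 2) ℂ) = gC ∨
      ∃ c s : ℂ, c ^ 2 + s ^ 2 = 1 ∧ (u : Matrix (Fin 2) (Fin 2) ℂ) = !![c, s; -s, c]}

/-! ### Auxiliary constructions -/

/-- The rotation matrix in `SO(2, ℂ)`. -/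
def soM (c s : ℂ) : Matrix (Fin 2) (Fin 2) ℂ := !![c, s; -s, c]

lemma soM_mul_soM (c s : ℂ) (h : c ^ 2 + s ^ 2 = 1) :
    soM c s * soM c (-s) = 1 := by
  ext i j
  fin_cases i <;> fin_cases j <;>
    simp [soM, Matrix.mul_apply, Fin.sum_univ_two, Matrix.one_apply] <;>
    first
      | ring1
      | linear_combination h
      | linear_combination -h

lemma soM_mul_soM' (c s : ℂ) (h : c ^ 2 + s ^ 2 = 1) :
    soM c (-s) * soM c s = 1 := by
  have := soM_mul_soM c (-s) (by linear_combination h)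
  simpa using this

/-- `soM c s` as an element of `GL(2, ℂ)`. -/
noncomputable def soU (c s : ℂ) (h : c ^ 2 + s ^ 2 = 1) : GL (Fin 2) ℂ :=
  ⟨soM c s, soM c (-s), soM_mul_soM c s h, soM_mul_soM' c s h⟩

lemma sqrt2_sq : (Real.sqrt 2 : ℂ) * (Real.sqrt 2 : ℂ) = 2 := by
  rw [← Complex.ofReal_mul, Real.mul_self_sqrt (by norm_num : (0:ℝ) ≤ 2)]
  norm_num

lemma gC_mul_gC : gC * gC = 1 := by
  ext i j
  fin_cases i <;> fin_cases j <;>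
    simp [gC, Matrix.mul_apply, Fin.sum_univ_two, Matrix.one_apply] <;>
    first
      | ring1
      | linear_combination sqrt2_sq
      | linear_combination -sqrt2_sq
      | linear_combination Complex.I_sq
      | linear_combination -Complex.I_sq
      | linear_combination sqrt2_sq + Complex.I_sq
      | linear_combination -sqrt2_sq - Complex.I_sq
      | linear_combination sqrt2_sq - Complex.I_sq
      | linear_combination -sqrt2_sq + Complex.I_sq

/-- `gC` as an element of `GL(2, ℂ)`. -/
noncomputable def gU : GL (Fin 2) ℂ := ⟨gC, gC, gC_mul_gC, gC_mul_gC⟩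

lemma gU_mem : gU ∈ Hgroup :=
  Subgroup.subset_closure (Or.inl rfl)

lemma soU_mem (c s : ℂ) (h : c ^ 2 + s ^ 2 = 1) : soU c s h ∈ Hgroup :=
  Subgroup.subset_closure (Or.inr ⟨c, s, h, rfl⟩)

/-- Combining two matrices preserving `U` by a real linear combination. -/
lemma comb {U : Submodule ℝ (Fin 2 → ℂ)} {M N P : Matrix (Fin 2) (Fin 2) ℂ} (a b : ℝ)
    (hP : P = (a : ℂ) • M + (b : ℂ) • N)
    (hM : ∀ v ∈ U, M.mulVec v ∈ U) (hN : ∀ v ∈ U, N.mulVec v ∈ U) :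
    ∀ v ∈ U, P.mulVec v ∈ U := by
  intro v hv
  have e : ∀ (r : ℝ) (w : Fin 2 → ℂ), (r : ℂ) • w = r • w := by
    intro r w
    rw [← Complex.coe_algebraMap, algebraMap_smul]
  rw [hP, Matrix.add_mulVec, Matrix.smul_mulVec, Matrix.smul_mulVec, e, e]
  exact U.add_mem (U.smul_mem a (hM v hv)) (U.smul_mem b (hN v hv))

/-- If `U` contains `![a,0]`, `![i a, 0]`, `![0, a]`, `![0, i a]` for some `a ≠ 0`,
then `U = ⊤`. -/
lemma fill {U : Submodule ℝ (Fin 2 → ℂ)} {a : ℂ} (ha : a ≠ 0)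
    (h1 : ![a, 0] ∈ U) (h2 : ![Complex.I * a, 0] ∈ U)
    (h3 : ![(0 : ℂ), a] ∈ U) (h4 : ![(0 : ℂ), Complex.I * a] ∈ U) : U = ⊤ := by
  rw [eq_top_iff]
  intro w _
  have key : ∀ z : ℂ, ((z / a).re : ℂ) * a + ((z / a).im : ℂ) * (Complex.I * a) = z := by
    intro z
    have hz : ((z / a).re : ℂ) + (z / a).im * Complex.I = z / a := Complex.re_add_im _
    have hz' : (((z / a).re : ℂ) + (z / a).im * Complex.I) * a = z := by
      rw [hz, div_mul_cancel₀ _ ha]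
    linear_combination hz'
  have hw : w = (w 0 / a).re • ![a, 0] + (w 0 / a).im • ![Complex.I * a, 0]
      + (w 1 / a).re • ![(0 : ℂ), a] + (w 1 / a).im • ![(0 : ℂ), Complex.I * a] := by
    funext j
    fin_cases j <;> simp [Complex.real_smul] <;>
      first
        | linear_combination key (w 0)
        | linear_combination -key (w 0)
        | linear_combination key (w 1)
        | linear_combination -key (w 1)
  rw [hw]
  exact U.add_mem (U.add_mem (U.add_mem (U.smul_mem _ h1) (U.smul_mem _ h2))
    (U.smul_mem _ h3)) (U.smul_mem _ h4)

set_option maxHeartbeats 1000000 in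
/-- **Theorem 3.8 (key step).** `H` acts irreducibly on `ℂ²` regarded as a real
vector space: the only `H`-invariant real-linear subspaces of `ℂ²` are `0` and `ℂ²`. -/
theorem Hgroup_acts_irreducibly_on_C2_real :
    ∀ U : Submodule ℝ (Fin 2 → ℂ),
      (∀ h ∈ Hgroup, ∀ v ∈ U, (h : Matrix (Fin 2) (Fin 2) ℂ).mulVec v ∈ U) →
      U = ⊥ ∨ U = ⊤ := by
  intro U hU
  by_cases hbot : U = ⊥
  · exact Or.inl hbot
  right
  -- closure under the generators
  have hId : ∀ v ∈ U, ((1 : Matrix (Fin 2) (Fin 2) ℂ)).mulVec v ∈ U := by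
    intro v hv; simpa [Matrix.one_mulVec] using hv
  have hso : ∀ (c t : ℂ), c ^ 2 + t ^ 2 = 1 → ∀ v ∈ U, (soM c t).mulVec v ∈ U := by
    intro c t h v hv
    exact hU (soU c t h) (soU_mem c t h) v hv
  have hG : ∀ v ∈ U, gC.mulVec v ∈ U := fun v hv => hU gU gU_mem v hv
  have hgso : ∀ (c t : ℂ), c ^ 2 + t ^ 2 = 1 → ∀ v ∈ U, (gC * soM c t).mulVec v ∈ U := by
    intro c t h v hv
    have := hU (gU * soU c t h) (mul_mem gU_mem (soU_mem c t h)) v hv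
    rwa [Units.val_mul] at this
  have c34 : ((5 / 4 : ℂ)) ^ 2 + (3 / 4 * Complex.I) ^ 2 = 1 := by
    linear_combination (9 / 16 : ℂ) * Complex.I_sq
  have c43 : ((3 / 4 * Complex.I : ℂ)) ^ 2 + (5 / 4 : ℂ) ^ 2 = 1 := by
    linear_combination (9 / 16 : ℂ) * Complex.I_sq
  have c01 : ((0 : ℂ)) ^ 2 + (1 : ℂ) ^ 2 = 1 := by norm_num
  have hJ := hso 0 1 c01
  have hR3 := hso (5 / 4) (3 / 4 * Complex.I) c34
  have hR4 := hso (3 / 4 * Complex.I) (5 / 4) c43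
  -- products with gC, as explicit matrices
  have e6 : gC * soM 0 1 = !![-Complex.I, (Real.sqrt 2 : ℂ); (Real.sqrt 2 : ℂ), Complex.I] := by
    ext i j
    fin_cases i <;> fin_cases j <;>
      simp [gC, soM, Matrix.mul_apply, Fin.sum_univ_two]
  have e7 : gC * soM (5 / 4) (3 / 4 * Complex.I) =
      !![(5 * (Real.sqrt 2 : ℂ) + 3) / 4, (3 * (Real.sqrt 2 : ℂ) + 5) / 4 * Complex.I;
         (3 * (Real.sqrt 2 : ℂ) + 5) / 4 * Complex.I, -((5 * (Real.sqrt 2 : ℂ) + 3) / 4)] := by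
    ext i j
    fin_cases i <;> fin_cases j <;>
      simp [gC, soM, Matrix.mul_apply, Fin.sum_univ_two] <;>
      first
        | ring1
        | linear_combination (3 / 4 : ℂ) * Complex.I_sq
        | linear_combination (-(3 / 4) : ℂ) * Complex.I_sq
        | linear_combination (3 / 2 : ℂ) * Complex.I_sq
        | linear_combination (-(3 / 2) : ℂ) * Complex.I_sq
  have e8 : gC * soM (3 / 4 * Complex.I) (5 / 4) =
      !![(3 * (Real.sqrt 2 : ℂ) - 5) / 4 * Complex.I, (5 * (Real.sqrt 2 : ℂ) - 3) / 4;
         (5 * (Real.sqrt 2 : ℂ) - 3) / 4, -((3 * (Real.sqrt 2 : ℂ) - 5) / 4 * Complex.I)] := by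
    ext i j
    fin_cases i <;> fin_cases j <;>
      simp [gC, soM, Matrix.mul_apply, Fin.sum_univ_two] <;>
      first
        | ring1
        | linear_combination (3 / 4 : ℂ) * Complex.I_sq
        | linear_combination (-(3 / 4) : ℂ) * Complex.I_sq
        | linear_combination (3 / 2 : ℂ) * Complex.I_sq
        | linear_combination (-(3 / 2) : ℂ) * Complex.I_sq
  have hM6 : ∀ v ∈ U,
      (!![-Complex.I, (Real.sqrt 2 : ℂ); (Real.sqrt 2 : ℂ), Complex.I]).mulVec v ∈ U := by
    intro v hv; have := hgso 0 1 c01 v hv; rwa [e6] at this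
  have hM7 : ∀ v ∈ U,
      (!![(5 * (Real.sqrt 2 : ℂ) + 3) / 4, (3 * (Real.sqrt 2 : ℂ) + 5) / 4 * Complex.I;
          (3 * (Real.sqrt 2 : ℂ) + 5) / 4 * Complex.I,
          -((5 * (Real.sqrt 2 : ℂ) + 3) / 4)]).mulVec v ∈ U := by
    intro v hv; have := hgso (5 / 4) (3 / 4 * Complex.I) c34 v hv; rwa [e7] at this
  have hM8 : ∀ v ∈ U,
      (!![(3 * (Real.sqrt 2 : ℂ) - 5) / 4 * Complex.I, (5 * (Real.sqrt 2 : ℂ) - 3) / 4;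
          (5 * (Real.sqrt 2 : ℂ) - 3) / 4,
          -((3 * (Real.sqrt 2 : ℂ) - 5) / 4 * Complex.I)]).mulVec v ∈ U := by
    intro v hv; have := hgso (3 / 4 * Complex.I) (5 / 4) c43 v hv; rwa [e8] at this
  -- the eight basic matrices
  have hiI : ∀ v ∈ U, (!![Complex.I, 0; 0, Complex.I]).mulVec v ∈ U := by
    refine comb (4 / 3) (-(5 / 3)) ?_ hR4 hJ
    ext i j
    fin_cases i <;> fin_cases j <;> simp [soM] <;> push_cast <;> ring
  have hiJ : ∀ v ∈ U, (!![0, Complex.I; -Complex.I, 0]).mulVec v ∈ U := by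
    refine comb (4 / 3) (-(5 / 3)) ?_ hR3 hId
    ext i j
    fin_cases i <;> fin_cases j <;> simp [soM, Matrix.one_apply] <;> push_cast <;> ring
  have hX : ∀ v ∈ U, (!![(1 : ℂ), 0; 0, -1]).mulVec v ∈ U := by
    refine comb ((3 * Real.sqrt 2 + 5) / 3) (-(4 / 3)) ?_ hG hM7
    ext i j
    fin_cases i <;> fin_cases j <;> simp [gC] <;> push_cast <;>
      first
        | ring1
        | linear_combination sqrt2_sq
        | linear_combination -sqrt2_sq
        | linear_combination Complex.I * sqrt2_sq
        | linear_combination -Complex.I * sqrt2_sq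
  have hiY : ∀ v ∈ U, (!![0, Complex.I; Complex.I, 0]).mulVec v ∈ U := by
    refine comb (-((5 * Real.sqrt 2 + 3) / 3)) (4 * Real.sqrt 2 / 3) ?_ hG hM7
    ext i j
    fin_cases i <;> fin_cases j <;> simp [gC] <;> push_cast <;>
      first
        | ring1
        | linear_combination sqrt2_sq
        | linear_combination -sqrt2_sq
        | linear_combination Complex.I * sqrt2_sq
        | linear_combination -Complex.I * sqrt2_sq
  have hiX : ∀ v ∈ U, (!![Complex.I, 0; 0, -Complex.I]).mulVec v ∈ U := by
    refine comb (-((5 * Real.sqrt 2 - 3) / 3)) (4 * Real.sqrt 2 / 3) ?_ hM6 hM8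
    ext i j
    fin_cases i <;> fin_cases j <;> simp <;> push_cast <;>
      first
        | ring1
        | linear_combination sqrt2_sq
        | linear_combination -sqrt2_sq
        | linear_combination Complex.I * sqrt2_sq
        | linear_combination -Complex.I * sqrt2_sq
  have hY : ∀ v ∈ U, (!![(0 : ℂ), 1; 1, 0]).mulVec v ∈ U := by
    refine comb ((3 * Real.sqrt 2 - 5) / 3) (4 / 3) ?_ hM6 hM8
    ext i j
    fin_cases i <;> fin_cases j <;> simp <;> push_cast <;>
      first
        | ring1
        | linear_combination sqrt2_sq
        | linear_combination -sqrt2_sq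
        | linear_combination Complex.I * sqrt2_sq
        | linear_combination -Complex.I * sqrt2_sq
  -- the elementary matrices and their multiples by I
  have hE11 : ∀ v ∈ U, (!![(1 : ℂ), 0; 0, 0]).mulVec v ∈ U := by
    refine comb (1 / 2) (1 / 2) ?_ hId hX
    ext i j
    fin_cases i <;> fin_cases j <;> simp [Matrix.one_apply] <;> push_cast <;> ring
  have hE22 : ∀ v ∈ U, (!![(0 : ℂ), 0; 0, 1]).mulVec v ∈ U := by
    refine comb (1 / 2) (-(1 / 2)) ?_ hId hX
    ext i j
    fin_cases i <;> fin_cases j <;> simp [Matrix.one_apply] <;> push_cast <;> ring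
  have hiE11 : ∀ v ∈ U, (!![Complex.I, 0; 0, 0]).mulVec v ∈ U := by
    refine comb (1 / 2) (1 / 2) ?_ hiI hiX
    ext i j
    fin_cases i <;> fin_cases j <;> simp <;> push_cast <;> ring
  have hiE22 : ∀ v ∈ U, (!![(0 : ℂ), 0; 0, Complex.I]).mulVec v ∈ U := by
    refine comb (1 / 2) (-(1 / 2)) ?_ hiI hiX
    ext i j
    fin_cases i <;> fin_cases j <;> simp <;> push_cast <;> ring
  have hE12 : ∀ v ∈ U, (!![(0 : ℂ), 1; 0, 0]).mulVec v ∈ U := by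
    refine comb (1 / 2) (1 / 2) ?_ hJ hY
    ext i j
    fin_cases i <;> fin_cases j <;> simp [soM] <;> push_cast <;> ring
  have hE21 : ∀ v ∈ U, (!![(0 : ℂ), 0; 1, 0]).mulVec v ∈ U := by
    refine comb (-(1 / 2)) (1 / 2) ?_ hJ hY
    ext i j
    fin_cases i <;> fin_cases j <;> simp [soM] <;> push_cast <;> ring
  have hiE12 : ∀ v ∈ U, (!![(0 : ℂ), Complex.I; 0, 0]).mulVec v ∈ U := by
    refine comb (1 / 2) (1 / 2) ?_ hiJ hiY
    ext i j
    fin_cases i <;> fin_cases j <;> simp <;> push_cast <;> ring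
  have hiE21 : ∀ v ∈ U, (!![(0 : ℂ), 0; Complex.I, 0]).mulVec v ∈ U := by
    refine comb (-(1 / 2)) (1 / 2) ?_ hiJ hiY
    ext i j
    fin_cases i <;> fin_cases j <;> simp <;> push_cast <;> ring
  -- pick a nonzero vector in U
  obtain ⟨v, hv, hvne⟩ := Submodule.ne_bot_iff U |>.mp hbot
  have hv01 : v 0 ≠ 0 ∨ v 1 ≠ 0 := by
    by_contra h
    push_neg at h
    exact hvne (funext fun j => by fin_cases j <;> simp [h.1, h.2])
  rcases hv01 with h0 | h1
  · refine fill h0 ?_ ?_ ?_ ?_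
    · have := hE11 v hv
      have e : (!![(1 : ℂ), 0; 0, 0]).mulVec v = ![v 0, 0] := by
        funext j; fin_cases j <;> simp [Matrix.mulVec, dotProduct, Fin.sum_univ_two]
      rwa [e] at this
    · have := hiE11 v hv
      have e : (!![Complex.I, 0; 0, 0]).mulVec v = ![Complex.I * v 0, 0] := by
        funext j; fin_cases j <;> simp [Matrix.mulVec, dotProduct, Fin.sum_univ_two]
      rwa [e] at this
    · have := hE21 v hv
      have e : (!![(0 : ℂ), 0; 1, 0]).mulVec v = ![(0 : ℂ), v 0] := by
        funext j; fin_cases j <;> simp [Matrix.mulVec, dotProduct, Fin.sum_univ_two]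
      rwa [e] at this
    · have := hiE21 v hv
      have e : (!![(0 : ℂ), 0; Complex.I, 0]).mulVec v = ![(0 : ℂ), Complex.I * v 0] := by
        funext j; fin_cases j <;> simp [Matrix.mulVec, dotProduct, Fin.sum_univ_two]
      rwa [e] at this
  · refine fill h1 ?_ ?_ ?_ ?_
    · have := hE12 v hv
      have e : (!![(0 : ℂ), 1; 0, 0]).mulVec v = ![v 1, 0] := by
        funext j; fin_cases j <;> simp [Matrix.mulVec, dotProduct, Fin.sum_univ_two]
      rwa [e] at this
    · have := hiE12 v hv
      have e : (!![(0 : ℂ), Complex.I; 0, 0]).mulVec v = ![Complex.I * v 1, 0] := by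
        funext j; fin_cases j <;> simp [Matrix.mulVec, dotProduct, Fin.sum_univ_two]
      rwa [e] at this
    · have := hE22 v hv
      have e : (!![(0 : ℂ), 0; 0, 1]).mulVec v = ![(0 : ℂ), v 1] := by
        funext j; fin_cases j <;> simp [Matrix.mulVec, dotProduct, Fin.sum_univ_two]
      rwa [e] at this
    · have := hiE22 v hv
      have e : (!![(0 : ℂ), 0; 0, Complex.I]).mulVec v = ![(0 : ℂ), Complex.I * v 1] := by
        funext j; fin_cases j <;> simp [Matrix.mulVec, dotProduct, Fin.sum_univ_two]
      rwa [e] at this
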